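/- arXiv:1501.06841 — 6 statements merged into one kernel-verified Lean document; each statement's English description precedes it below -/
import Mathlib

section
/- Let A = ⟨α₀, α∞, {A_σ}⟩ and B = ⟨β₀, β∞, {B_σ}⟩ be weighted finite automata over finite alphabet Σ realizing functions f_A, f_B ∈ ℓ²(Σ*). If the spectral radius of C = ∑_{σ∈Σ} A_σ ⊗ B_σ satisfies ρ(C) < 1, then ∑_{x ∈ Σ*} f_A(x) f_B(x) = (α₀ ⊗ β₀)ᵀ (I − C)^{-1} (α∞ ⊗ β∞). -/
/-!
Multiplying the two automata letterwise gives `f_A(x) f_B(x) = γ₀ᵀ C_x γ∞` with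
`C_x = ∏ (A_σ ⊗ B_σ)` and `γ = α ⊗ β` (mixed-product rule). Summing `C_x` over the words of
length `t` gives `Cᵗ`, so grouping the absolutely convergent series `∑ f_A f_B` by word length
turns it into `γ₀ᵀ (∑ Cᵗ) γ∞`. By Gelfand's formula `ρ(C) < 1` forces `‖Cᵗ‖ ≤ rᵗ` for some
`r < 1` eventually, so the Neumann series converges to `(I − C)⁻¹`.
-/

open Matrix Filter
open scoped Kronecker NNReal

/-- The function realized by a weighted finite automaton `⟨α₀, α∞, {A_σ}⟩`. -/
noncomputable def wfaFun {Γ : Type*} {n : ℕ} (α₀ αinf : Fin n → ℝ)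
    (A : Γ → Matrix (Fin n) (Fin n) ℝ) (x : List Γ) : ℝ :=
  α₀ ⬝ᵥ ((x.map A).prod).mulVec αinf

section BanachAlgebra

variable {A : Type*} [NormedRing A] [NormedAlgebra ℂ A] [CompleteSpace A]

theorem spectralRadius_lt_one_of_forall_norm_lt_one {a : A} (h : ∀ μ ∈ spectrum ℂ a, ‖μ‖ < 1) :
    spectralRadius ℂ a < 1 := by
  rcases (spectrum ℂ a).eq_empty_or_nonempty with hempty | hne
  · simp [spectralRadius, hempty]
  · exact_mod_cast spectrum.spectralRadius_lt_of_forall_lt_of_nonempty hne (r := 1)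
      fun μ hμ => by exact_mod_cast h μ hμ

theorem eventually_norm_pow_le_of_spectralRadius_lt {a : A} {r : ℝ≥0}
    (h : spectralRadius ℂ a < r) : ∀ᶠ n : ℕ in atTop, ‖a ^ n‖ ≤ (r : ℝ) ^ n := by
  have gelfand := spectrum.pow_nnnorm_pow_one_div_tendsto_nhds_spectralRadius a
  filter_upwards [gelfand.eventually_lt_const h, eventually_gt_atTop 0] with n hn hn0
  rw [one_div, ENNReal.rpow_inv_lt_iff (by positivity), ENNReal.rpow_natCast] at hn
  exact_mod_cast hn.le

theorem summable_norm_pow_of_spectralRadius_lt_one {a : A} (h : spectralRadius ℂ a < 1) :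
    Summable fun n : ℕ => ‖a ^ n‖ := by
  obtain ⟨r, hρr, hr1⟩ := ENNReal.lt_iff_exists_nnreal_btwn.mp h
  refine summable_of_isBigO_nat
    (summable_geometric_of_lt_one r.coe_nonneg (by exact_mod_cast hr1)) ?_
  exact ((eventually_norm_pow_le_of_spectralRadius_lt hρr).mono fun n hn => by
    simpa using hn).isBigO

end BanachAlgebra

theorem HasSum.dotProduct_mulVec {X R m n : Type*} [Fintype m] [Fintype n]
    [NonUnitalNonAssocSemiring R] [TopologicalSpace R] [IsTopologicalSemiring R]
    {f : X → Matrix m n R} {a : Matrix m n R} (hf : HasSum f a) (u : m → R) (w : n → R) :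
    HasSum (fun x => u ⬝ᵥ f x *ᵥ w) (u ⬝ᵥ a *ᵥ w) := by
  let L : Matrix m n R →+ R :=
    { toFun := fun M => u ⬝ᵥ M *ᵥ w
      map_zero' := by simp only [zero_mulVec, dotProduct_zero]
      map_add' := fun M M' => by simp only [add_mulVec, dotProduct_add] }
  exact hf.map L (continuous_const.dotProduct (continuous_id.matrix_mulVec continuous_const))

namespace Matrix

section NeumannSeries

variable {N : Type*} [Fintype N] [DecidableEq N]

section LinftyOpNorm

-- This norm induces the product topology, so `Summable` below has its usual meaning.
attribute [local instance] Matrix.linftyOpNormedRing Matrix.linftyOpNormedAlgebra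

theorem linfty_opNorm_map_ofReal (M : Matrix N N ℝ) : ‖M.map (algebraMap ℝ ℂ)‖ = ‖M‖ := by
  simp [linfty_opNorm_def]

theorem summable_pow_of_spectrum_norm_lt_one {C : Matrix N N ℝ}
    (hρ : ∀ μ ∈ spectrum ℂ (C.map (algebraMap ℝ ℂ)), ‖μ‖ < 1) :
    Summable fun t : ℕ => C ^ t := by
  refine Summable.of_norm ?_
  convert summable_norm_pow_of_spectralRadius_lt_one
    (spectralRadius_lt_one_of_forall_norm_lt_one hρ) using 2
  rw [← linfty_opNorm_map_ofReal, ← (algebraMap ℝ ℂ).mapMatrix_apply, map_pow]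
  rfl

end LinftyOpNorm

theorem hasSum_pow_of_spectrum_norm_lt_one {C : Matrix N N ℝ}
    (hρ : ∀ μ ∈ spectrum ℂ (C.map (algebraMap ℝ ℂ)), ‖μ‖ < 1) :
    HasSum (fun t : ℕ => C ^ t) (1 - C)⁻¹ := by
  have hC := summable_pow_of_spectrum_norm_lt_one hρ
  rw [inv_eq_right_inv hC.one_sub_mul_tsum_pow]
  exact hC.hasSum

end NeumannSeries

section Kronecker

variable {R ι κ : Type*} [CommSemiring R] [Fintype ι] [Fintype κ]

theorem dotProduct_kronecker_vec (u w : ι → R) (v z : κ → R) :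
    (fun q : ι × κ => u q.1 * v q.2) ⬝ᵥ (fun q : ι × κ => w q.1 * z q.2)
      = (u ⬝ᵥ w) * (v ⬝ᵥ z) := by
  simp only [dotProduct, Finset.sum_mul_sum, Fintype.sum_prod_type]
  exact Finset.sum_congr rfl fun i _ => Finset.sum_congr rfl fun j _ => by ring

theorem kronecker_mulVec_kronecker_vec (P : Matrix ι ι R) (Q : Matrix κ κ R)
    (w : ι → R) (z : κ → R) :
    (P ⊗ₖ Q) *ᵥ (fun q : ι × κ => w q.1 * z q.2)
      = fun q : ι × κ => (P *ᵥ w) q.1 * (Q *ᵥ z) q.2 :=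
  funext fun q => dotProduct_kronecker_vec (P q.1) w (Q q.2) z

theorem list_prod_map_kronecker [DecidableEq ι] [DecidableEq κ] {Γ : Type*}
    (A : Γ → Matrix ι ι R) (B : Γ → Matrix κ κ R) (x : List Γ) :
    (x.map fun σ => A σ ⊗ₖ B σ).prod = (x.map A).prod ⊗ₖ (x.map B).prod := by
  induction x with
  | nil => simp
  | cons σ x ih => simp [ih, mul_kronecker_mul]

end Kronecker

end Matrix

theorem sum_prod_ofFn_eq_pow {Γ R : Type*} [Fintype Γ] [Semiring R] (D : Γ → R) (t : ℕ) :
    ∑ v : Fin t → Γ, (List.ofFn fun i => D (v i)).prod = (∑ σ, D σ) ^ t := by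
  induction t with
  | zero => simp
  | succ t ih =>
    rw [pow_succ', ← ih, Finset.sum_mul_sum, ← (Fin.consEquiv fun _ => Γ).sum_comp,
      Fintype.sum_prod_type]
    simp [Fin.consEquiv, List.ofFn_succ]

theorem sum_dotProduct_prod_ofFn_mulVec {Γ R N : Type*} [Fintype Γ] [Fintype N] [DecidableEq N]
    [Semiring R] (D : Γ → Matrix N N R) (u w : N → R) (t : ℕ) :
    ∑ v : Fin t → Γ, u ⬝ᵥ ((List.ofFn v).map D).prod *ᵥ w = u ⬝ᵥ (∑ σ, D σ) ^ t *ᵥ w := by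
  simp only [List.map_ofFn, ← sum_prod_ofFn_eq_pow, sum_mulVec, dotProduct_sum]
  rfl

theorem List.hasSum_of_hasSum_sum_ofFn {Γ E : Type*} [Fintype Γ] [AddCommMonoid E]
    [TopologicalSpace E] [ContinuousAdd E] [T3Space E] {f : List Γ → E} {a : E}
    (hf : Summable f) (h : HasSum (fun t : ℕ => ∑ v : Fin t → Γ, f (List.ofFn v)) a) :
    HasSum f a :=
  List.equivSigmaTuple.symm.hasSum_iff.mp <|
    h.sigma_of_hasSum (fun _ => hasSum_fintype _) (List.equivSigmaTuple.symm.summable_iff.mpr hf)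

theorem summable_mul_of_summable_sq {ι : Type*} {f g : ι → ℝ} (hf : Summable fun i => f i ^ 2)
    (hg : Summable fun i => g i ^ 2) : Summable fun i => f i * g i :=
  ((hf.add hg).div_const 2).of_norm_bounded fun i => by
    rw [Real.norm_eq_abs, abs_mul, le_div_iff₀ two_pos, ← sq_abs (f i), ← sq_abs (g i)]
    linarith [two_mul_le_add_sq |f i| |g i|]

theorem wfaFun_mul_wfaFun {Γ : Type*} {n m : ℕ} (α₀ αinf : Fin n → ℝ)
    (A : Γ → Matrix (Fin n) (Fin n) ℝ) (β₀ βinf : Fin m → ℝ) (B : Γ → Matrix (Fin m) (Fin m) ℝ)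
    (x : List Γ) :
    wfaFun α₀ αinf A x * wfaFun β₀ βinf B x =
      (fun q : Fin n × Fin m => α₀ q.1 * β₀ q.2) ⬝ᵥ
        (x.map fun σ => A σ ⊗ₖ B σ).prod *ᵥ (fun q : Fin n × Fin m => αinf q.1 * βinf q.2) := by
  rw [list_prod_map_kronecker, kronecker_mulVec_kronecker_vec, dotProduct_kronecker_vec]
  rfl

/-- inner product of two `ℓ²` rational series via the resolvent of
the Kronecker-product transition matrix, assuming its spectral radius is `< 1`. -/
theorem inner_product_rational_series {Γ : Type*} [Fintype Γ] {n m : ℕ}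
    (α₀ αinf : Fin n → ℝ) (A : Γ → Matrix (Fin n) (Fin n) ℝ)
    (β₀ βinf : Fin m → ℝ) (B : Γ → Matrix (Fin m) (Fin m) ℝ)
    (hA : Summable fun x : List Γ => (wfaFun α₀ αinf A x) ^ 2)
    (hB : Summable fun x : List Γ => (wfaFun β₀ βinf B x) ^ 2)
    (C : Matrix (Fin n × Fin m) (Fin n × Fin m) ℝ)
    (hC : C = ∑ σ : Γ, (A σ) ⊗ₖ (B σ))
    (hρ : ∀ μ ∈ spectrum ℂ (C.map (algebraMap ℝ ℂ)), ‖μ‖ < 1) :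
    HasSum (fun x : List Γ => wfaFun α₀ αinf A x * wfaFun β₀ βinf B x)
      ((fun q : Fin n × Fin m => α₀ q.1 * β₀ q.2) ⬝ᵥ
        ((1 - C)⁻¹).mulVec (fun q : Fin n × Fin m => αinf q.1 * βinf q.2)) := by
  refine List.hasSum_of_hasSum_sum_ofFn (summable_mul_of_summable_sq hA hB) ?_
  simp only [wfaFun_mul_wfaFun, sum_dotProduct_prod_ofFn_mulVec, ← hC]
  exact (hasSum_pow_of_spectrum_norm_lt_one hρ).dotProduct_mulVec _ _
end

section
/- Let A = ⟨α₀, α∞, {A_σ}⟩ be an SVA (singular value automaton) with n states for f ∈ ℓ¹(Σ*) with Hankel singular values 𝔰₁ ≥ ⋯ ≥ 𝔰ₙ > 0. Then for all j ∈ [n]: ∑_{i=1}^n 𝔰ᵢ ∑_{σ∈Σ} A_σ(i,j)² = 𝔰ⱼ − α₀(j)². -/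
/-!
Splitting every nonempty word as `xσ` gives `‖p_j‖² = α₀(j)² + ∑_σ ‖p_j(·σ)‖²`. The forward
recursion writes `p_j(·σ) = ∑_i A_σ(i,j) p_i`, whose squared norm is `∑_i 𝔰_i A_σ(i,j)²` by the
orthogonality of the `p_i`.
-/

theorem List.injective_append_singleton {Γ : Type*} :
    Function.Injective fun q : Γ × List Γ => q.2 ++ [q.1] := by
  rintro ⟨σ, x⟩ ⟨τ, y⟩ h
  obtain ⟨hxy, hστ⟩ := List.append_inj' h rfl
  simp_all

theorem HasSum.comp_append_singleton {α Γ : Type*} [AddCommGroup α] [TopologicalSpace α]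
    [IsTopologicalAddGroup α] {g : List Γ → α} {a : α} (h : HasSum g a) :
    HasSum (fun q : Γ × List Γ => g (q.2 ++ [q.1])) (a - g []) := by
  classical
  have hnonempty := hasSum_ite_sub_hasSum h []
  rw [← List.injective_append_singleton.hasSum_iff] at hnonempty
  · simpa [Function.comp_def] using hnonempty
  · intro l hl
    rcases List.eq_nil_or_concat' l with rfl | ⟨x, σ, rfl⟩
    · simp
    · exact absurd ⟨(σ, x), rfl⟩ hl

theorem hasSum_sq_sum_mul_of_orthogonal {ι β : Type*} [Fintype ι] [DecidableEq ι]
    {p : ι → β → ℝ} {s : ι → ℝ}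
    (horth : ∀ i k, HasSum (fun x => p i x * p k x) (if i = k then s i else 0)) (c : ι → ℝ) :
    HasSum (fun x => (∑ i, p i x * c i) ^ 2) (∑ i, s i * c i ^ 2) := by
  have hexpand : ∀ x, (∑ i, p i x * c i) ^ 2 = ∑ i, ∑ k, c i * c k * (p i x * p k x) := by
    intro x
    rw [sq, Finset.sum_mul_sum]
    exact Finset.sum_congr rfl fun i _ => Finset.sum_congr rfl fun k _ => by ring
  have hdiag : ∑ i, ∑ k, c i * c k * (if i = k then s i else 0) = ∑ i, s i * c i ^ 2 := by
    refine Finset.sum_congr rfl fun i _ => ?_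
    simp only [mul_ite, mul_zero, Finset.sum_ite_eq, Finset.mem_univ, if_true]
    ring
  rw [← hdiag]
  simpa only [hexpand] using
    hasSum_sum fun i _ => hasSum_sum fun k _ => (horth i k).mul_left (c i * c k)

theorem sva_forward_equations_general {Γ : Type*} [Fintype Γ] {n : ℕ}
    (α₀ : Fin n → ℝ) (A : Γ → Matrix (Fin n) (Fin n) ℝ)
    (s : Fin n → ℝ)
    (p : Fin n → List Γ → ℝ)
    (hnil : ∀ j, p j [] = α₀ j)
    (hstep : ∀ (j : Fin n) (x : List Γ) (σ : Γ),
      p j (x ++ [σ]) = ∑ i, p i x * A σ i j)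
    (horth : ∀ i j : Fin n,
      HasSum (fun x : List Γ => p i x * p j x) (if i = j then s i else 0)) :
    ∀ j : Fin n, ∑ i, s i * ∑ σ : Γ, (A σ i j) ^ 2 = s j - (α₀ j) ^ 2 := by
  intro j
  have hnorm : HasSum (fun x => p j x ^ 2) (s j) := by simpa [sq] using horth j j
  have hlast : HasSum (fun q : Γ × List Γ => p j (q.2 ++ [q.1]) ^ 2) (s j - α₀ j ^ 2) := by
    simpa only [hnil] using hnorm.comp_append_singleton
  have hfiber : ∀ σ, HasSum (fun x => p j (x ++ [σ]) ^ 2) (∑ i, s i * A σ i j ^ 2) := by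
    intro σ
    simpa only [hstep] using hasSum_sq_sum_mul_of_orthogonal horth (A σ · j)
  calc ∑ i, s i * ∑ σ, A σ i j ^ 2 = ∑ σ, ∑ i, s i * A σ i j ^ 2 := by
        simp only [Finset.mul_sum]
        exact Finset.sum_comm
    _ = s j - α₀ j ^ 2 := (hasSum_fintype _).unique (hlast.prod_fiberwise hfiber)

/-- the forward SVA equations. Let `A` be an SVA with `n` states
for `f ∈ ℓ¹` with Hankel singular values `𝔰₁ ≥ ⋯ ≥ 𝔰ₙ > 0`; equivalently, the
columns `p j` of the forward matrix (given by `p j λ = α₀ j` and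
`p j (xσ) = ∑ i, p i x * A σ i j`) are pairwise orthogonal in `ℓ²` with
`‖p j‖₂² = 𝔰ⱼ`.  Then for all `j`,
`∑ i, 𝔰ᵢ ∑ σ, A_σ(i,j)² = 𝔰ⱼ − α₀(j)²`. -/
theorem sva_forward_equations {Γ : Type*} [Fintype Γ] {n : ℕ}
    (α₀ : Fin n → ℝ) (A : Γ → Matrix (Fin n) (Fin n) ℝ)
    (s : Fin n → ℝ) (hpos : ∀ i, 0 < s i)
    (hmono : ∀ i j : Fin n, i ≤ j → s j ≤ s i)
    (p : Fin n → List Γ → ℝ)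
    (hnil : ∀ j, p j [] = α₀ j)
    (hstep : ∀ (j : Fin n) (x : List Γ) (σ : Γ),
      p j (x ++ [σ]) = ∑ i, p i x * A σ i j)
    (horth : ∀ i j : Fin n,
      HasSum (fun x : List Γ => p i x * p j x) (if i = j then s i else 0)) :
    ∀ j : Fin n, ∑ i, s i * ∑ σ : Γ, (A σ i j) ^ 2 = s j - (α₀ j) ^ 2 :=
  sva_forward_equations_general α₀ A s p hnil hstep horth
end

section
/- Let A = ⟨α₀, α∞, {A_σ}⟩ be an SVA with n states for f ∈ ℓ¹(Σ*) with Hankel singular values 𝔰₁ ≥ ⋯ ≥ 𝔰ₙ > 0. Then for all i ∈ [n]: ∑_{j=1}^n 𝔰ⱼ ∑_{σ∈Σ} A_σ(i,j)² = 𝔰ᵢ − α∞(i)². -/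
open Matrix

/-- the backward SVA equations. Let `A` be an SVA with `n` states
for `f ∈ ℓ¹` with Hankel singular values `𝔰₁ ≥ ⋯ ≥ 𝔰ₙ > 0`; equivalently, the
columns `q i` of the backward matrix (given by `q i λ = α∞ i` and
`q i (σx) = ∑ j, A σ i j * q j x`) are pairwise orthogonal in `ℓ²` with
`‖q i‖₂² = 𝔰ᵢ`.  Then for all `i`,
`∑ j, 𝔰ⱼ ∑ σ, A_σ(i,j)² = 𝔰ᵢ − α∞(i)²`. -/
theorem sva_backward_equations {Γ : Type*} [Fintype Γ] {n : ℕ}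
    (αinf : Fin n → ℝ) (A : Γ → Matrix (Fin n) (Fin n) ℝ)
    (s : Fin n → ℝ) (hpos : ∀ i, 0 < s i)
    (hmono : ∀ i j : Fin n, i ≤ j → s j ≤ s i)
    (q : Fin n → List Γ → ℝ)
    (hnil : ∀ i, q i [] = αinf i)
    (hstep : ∀ (i : Fin n) (σ : Γ) (x : List Γ),
      q i (σ :: x) = ∑ j, A σ i j * q j x)
    (horth : ∀ i j : Fin n,
      HasSum (fun x : List Γ => q i x * q j x) (if i = j then s i else 0)) :
    ∀ i : Fin n, ∑ j, s j * ∑ σ : Γ, (A σ i j) ^ 2 = s i - (αinf i) ^ 2 := by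
  classical
  intro i
  -- the fiberwise sums over cons-lists
  set t : Γ → ℝ := fun σ =>
    ∑ j, ∑ k, (A σ i j * A σ i k) * (if j = k then s j else 0) with ht
  have hfib : ∀ σ : Γ, HasSum (fun x : List Γ => q i (σ :: x) * q i (σ :: x)) (t σ) := by
    intro σ
    have : HasSum (fun x : List Γ =>
        ∑ j, ∑ k, (A σ i j * A σ i k) * (q j x * q k x)) (t σ) := by
      refine hasSum_sum fun j _ => hasSum_sum fun k _ => ?_
      exact (horth j k).mul_left _
    refine this.congr_fun fun x => ?_
    rw [hstep, Finset.sum_mul_sum]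
    refine Finset.sum_congr rfl fun j _ => Finset.sum_congr rfl fun k _ => by ring
  -- sum over all cons-lists
  have hconsum : HasSum (fun p : Γ × List Γ => q i (p.1 :: p.2) * q i (p.1 :: p.2))
      (∑ σ : Γ, t σ) := by
    rw [← (Equiv.sigmaEquivProd Γ (List Γ)).hasSum_iff]
    refine HasSum.sigma_of_hasSum (hasSum_fintype t) (fun σ => hfib σ) ?_
    refine (summable_sigma_of_nonneg ?_).2 ⟨fun σ => (hfib σ).summable, ?_⟩
    · exact fun ⟨σ, x⟩ => mul_self_nonneg _
    · exact .of_finite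
  -- split off the empty list from the full sum
  have hempty : HasSum (fun x : List Γ => if x = [] then q i [] * q i [] else 0)
      (q i [] * q i []) := hasSum_ite_eq [] _
  have hsub := (horth i i).sub hempty
  simp only [if_pos rfl] at hsub
  have hinj : Function.Injective (fun p : Γ × List Γ => p.1 :: p.2) := by
    intro p p' h
    simp only [List.cons.injEq] at h
    exact Prod.ext h.1 h.2
  have hrest : HasSum (fun p : Γ × List Γ => q i (p.1 :: p.2) * q i (p.1 :: p.2))
      (s i - q i [] * q i []) := by
    have := (hinj.hasSum_iff (f := fun x : List Γ =>
        q i x * q i x - if x = [] then q i [] * q i [] else 0) ?_).2 hsub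
    · refine this.congr_fun fun p => ?_
      simp
    · intro x hx
      match x with
      | [] => simp
      | a :: l => exact absurd ⟨(a, l), rfl⟩ hx
  have key : ∑ σ : Γ, t σ = s i - q i [] * q i [] := hconsum.unique hrest
  rw [hnil, ← sq] at key
  rw [← key, ht]
  rw [Finset.sum_comm]
  refine Finset.sum_congr rfl fun j _ => ?_
  rw [Finset.mul_sum]
  refine Finset.sum_congr rfl fun σ _ => ?_
  simp [Finset.sum_ite_eq, sq]; ring
end

section
/- Let A be an SVA with n states for f ∈ ℓ¹(Σ*) with Hankel singular values 𝔰₁ ≥ ⋯ ≥ 𝔰ₙ > 0, and fix 1 ≤ n̂ < n. Then ∑_{σ∈Σ} ∑_{i=1}^{n̂} ∑_{j=n̂+1}^{n} A_σ(i,j)² ≤ (𝔰_{n̂+1} + ⋯ + 𝔰ₙ) / 𝔰_{n̂}. -/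
open Matrix

/-- in an SVA, the total squared weight of the transitions from
the first `nh` states to the last `n − nh` states is at most
`(𝔰_{nh+1} + ⋯ + 𝔰ₙ) / 𝔰_{nh}`. -/
theorem sva_offdiagonal_block_bound {Γ : Type*} [Fintype Γ] {n : ℕ}
    (A : Γ → Matrix (Fin n) (Fin n) ℝ) (α₀ : Fin n → ℝ)
    (s : Fin n → ℝ) (hpos : ∀ i, 0 < s i)
    (hmono : ∀ i j : Fin n, i ≤ j → s j ≤ s i)
    (hcol : ∀ j : Fin n, ∑ i, s i * ∑ σ : Γ, (A σ i j) ^ 2 = s j - (α₀ j) ^ 2)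
    (nh : ℕ) (h1 : 1 ≤ nh) (h2 : nh < n) :
    ∑ σ : Γ, ∑ i ∈ Finset.univ.filter (fun i : Fin n => (i : ℕ) < nh),
        ∑ j ∈ Finset.univ.filter (fun j : Fin n => nh ≤ (j : ℕ)), (A σ i j) ^ 2 ≤
      (∑ j ∈ Finset.univ.filter (fun j : Fin n => nh ≤ (j : ℕ)), s j) /
        s ⟨nh - 1, by omega⟩ := by
  set c : ℝ := s ⟨nh - 1, by omega⟩ with hc
  have hcpos : 0 < c := hpos _
  rw [le_div_iff₀ hcpos]
  -- reorder the LHS sums: σ, i, j  →  j, i, σ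
  have hre : ∑ σ : Γ, ∑ i ∈ Finset.univ.filter (fun i : Fin n => (i : ℕ) < nh),
        ∑ j ∈ Finset.univ.filter (fun j : Fin n => nh ≤ (j : ℕ)), (A σ i j) ^ 2
      = ∑ j ∈ Finset.univ.filter (fun j : Fin n => nh ≤ (j : ℕ)),
        ∑ i ∈ Finset.univ.filter (fun i : Fin n => (i : ℕ) < nh),
        ∑ σ : Γ, (A σ i j) ^ 2 := by
    rw [Finset.sum_comm]
    rw [show (∑ i ∈ Finset.univ.filter (fun i : Fin n => (i : ℕ) < nh), ∑ σ : Γ,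
        ∑ j ∈ Finset.univ.filter (fun j : Fin n => nh ≤ (j : ℕ)), (A σ i j) ^ 2)
      = ∑ i ∈ Finset.univ.filter (fun i : Fin n => (i : ℕ) < nh),
        ∑ j ∈ Finset.univ.filter (fun j : Fin n => nh ≤ (j : ℕ)), ∑ σ : Γ, (A σ i j) ^ 2
      from Finset.sum_congr rfl fun i _ => Finset.sum_comm]
    exact Finset.sum_comm
  rw [hre, Finset.sum_mul]
  apply Finset.sum_le_sum
  intro j hj
  have key : (∑ i ∈ Finset.univ.filter (fun i : Fin n => (i : ℕ) < nh),
      ∑ σ : Γ, (A σ i j) ^ 2) * c ≤ s j := by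
    calc (∑ i ∈ Finset.univ.filter (fun i : Fin n => (i : ℕ) < nh),
          ∑ σ : Γ, (A σ i j) ^ 2) * c
        = ∑ i ∈ Finset.univ.filter (fun i : Fin n => (i : ℕ) < nh),
          c * ∑ σ : Γ, (A σ i j) ^ 2 := by
          rw [Finset.sum_mul]; exact Finset.sum_congr rfl fun i _ => mul_comm _ _
      _ ≤ ∑ i ∈ Finset.univ.filter (fun i : Fin n => (i : ℕ) < nh),
          s i * ∑ σ : Γ, (A σ i j) ^ 2 := by
          apply Finset.sum_le_sum
          intro i hi
          have hiL : (i : ℕ) < nh := (Finset.mem_filter.mp hi).2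
          have hle : c ≤ s i := hmono i ⟨nh - 1, by omega⟩ (by
            show (i : ℕ) ≤ nh - 1; omega)
          exact mul_le_mul_of_nonneg_right hle
            (Finset.sum_nonneg fun σ _ => sq_nonneg _)
      _ ≤ ∑ i, s i * ∑ σ : Γ, (A σ i j) ^ 2 := by
          apply Finset.sum_le_sum_of_subset_of_nonneg (Finset.filter_subset _ _)
          intro i _ _
          exact mul_nonneg (hpos i).le (Finset.sum_nonneg fun σ _ => sq_nonneg _)
      _ = s j - (α₀ j) ^ 2 := hcol j
      _ ≤ s j := by nlinarith [sq_nonneg (α₀ j)]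
  exact key
end

section
/- Let f ∈ ℓ¹(Σ*) be rational of rank n with Hankel singular values 𝔰₁ ≥ ⋯ ≥ 𝔰ₙ, and fix 1 ≤ n̂ < n. For every rational f' : Σ* → ℝ of rank at most n̂ such that H_{f−f'} is a bounded operator on ℓ²(Σ*), the operator norm satisfies ‖H_f − H_{f'}‖_op ≥ 𝔰_{n̂+1}. -/
/-!
Suppose `C < 𝔰_{n̂+1}`. Since `H_{f'}` has rank at most `n̂` (`f'(xy) = ∑ₖ Lₖ(x) Rₖ(y)`), some
nonzero combination `g` of the first `n̂ + 1` right singular vectors `v₀, …, v_{n̂}` lies in its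
kernel, and `H_f` stretches `g` by at least `𝔰_{n̂+1}`. As `H_{f'}` need not be bounded on `ℓ²`, `g`
is cut down to a finite window `F` of words: there `H_{f'} g = 0` is a finite linear condition, and
the Gram matrix `T` of the `vᵢ` on `F` tends to the identity as `F` grows. By compactness of the
unit sphere, `𝔰_{n̂+1}² ‖T c‖² > C² ⟨c, T c⟩` for all unit `c` once `T` is close to the identity,
contradicting the bound on `H_{f-f'} g`.
-/

open Matrix

/-- `f` is realized by some WFA of dimension `m`. -/
def IsRealizedByDim {Γ : Type*} (m : ℕ) (f : List Γ → ℝ) : Prop :=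
  ∃ (β₀ βinf : Fin m → ℝ) (B : Γ → Matrix (Fin m) (Fin m) ℝ),
    ∀ x : List Γ, f x = wfaFun β₀ βinf B x

open Filter Topology Metric

theorem IsRealizedByDim.exists_hankel_factorization {Γ : Type*} {m : ℕ} {f : List Γ → ℝ}
    (hf : IsRealizedByDim m f) :
    ∃ L R : Fin m → List Γ → ℝ, ∀ x y, f (x ++ y) = ∑ k, L k x * R k y := by
  obtain ⟨β₀, βinf, B, hB⟩ := hf
  refine ⟨fun k x => (β₀ ᵥ* (x.map B).prod) k, fun k y => ((y.map B).prod *ᵥ βinf) k,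
    fun x y => ?_⟩
  rw [hB, wfaFun, List.map_append, List.prod_append, ← mulVec_mulVec, dotProduct_mulVec]
  rfl

theorem Matrix.exists_mem_sphere_mulVec_eq_zero {m ι : Type*} [Fintype m] [Fintype ι]
    (P : Matrix m ι ℝ) (h : Fintype.card m < Fintype.card ι) :
    ∃ c ∈ sphere (0 : ι → ℝ) 1, P *ᵥ c = 0 := by
  have hker : LinearMap.ker P.mulVecLin ≠ ⊥ :=
    LinearMap.ker_ne_bot_of_finrank_lt (by simpa using h)
  obtain ⟨c, hc, hc0⟩ := Submodule.exists_mem_ne_zero_of_ne_bot hker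
  refine ⟨(‖c‖⁻¹ : ℝ) • c, by simpa using norm_smul_inv_norm (𝕜 := ℝ) hc0, ?_⟩
  rw [mulVec_smul, show P *ᵥ c = 0 from hc, smul_zero]

theorem eventually_forall_sphere_mul_dotProduct_lt {ι : Type*} [Fintype ι] [DecidableEq ι]
    {a b : ℝ} (hab : a < b) :
    ∀ᶠ T in 𝓝 (1 : Matrix ι ι ℝ), ∀ c ∈ sphere (0 : ι → ℝ) 1,
      a * (c ⬝ᵥ T *ᵥ c) < b * (T *ᵥ c ⬝ᵥ T *ᵥ c) := by
  refine (isCompact_sphere 0 1).eventually_forall_of_forall_eventually fun c hc => ?_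
  have hc0 : 0 < c ⬝ᵥ c := by
    refine lt_of_le_of_ne (dotProduct_self_star_nonneg c) (Ne.symm ?_)
    simpa [dotProduct_self_eq_zero] using ne_zero_of_mem_sphere one_ne_zero ⟨c, hc⟩
  refine ContinuousAt.eventually_lt (by fun_prop) (by fun_prop) ?_
  simpa using mul_lt_mul_of_pos_right hab hc0

def window {ι α : Type*} (w : ι → α → ℝ) (F : Finset α) : Matrix ι F ℝ :=
  Matrix.of fun i y => w i y

theorem tendsto_window_mul_transpose {ι α : Type*} [Fintype ι] [DecidableEq ι]
    {w : ι → α → ℝ} (hw : ∀ i j, HasSum (fun x => w i x * w j x) (if i = j then 1 else 0)) :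
    Tendsto (fun F => window w F * (window w F)ᵀ) atTop (𝓝 1) :=
  tendsto_pi_nhds.2 fun i => tendsto_pi_nhds.2 fun j => by
    simp only [window, mul_apply, transpose_apply, of_apply, one_apply]
    exact (hw i j).congr fun F => (Finset.sum_coe_sort F _).symm

theorem hasSum_sq_sum_mul_of_orthonormal {ι α : Type*} [Fintype ι] [DecidableEq ι]
    {u : ι → α → ℝ} (hu : ∀ i j, HasSum (fun x => u i x * u j x) (if i = j then 1 else 0))
    (b : ι → ℝ) :
    HasSum (fun x => (∑ i, b i * u i x) ^ 2) (∑ i, b i ^ 2) := by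
  have hexpand : ∀ x, (∑ i, b i * u i x) ^ 2 = ∑ i, ∑ j, b i * b j * (u i x * u j x) := by
    intro x
    rw [sq, Finset.sum_mul_sum]
    exact Finset.sum_congr rfl fun i _ => Finset.sum_congr rfl fun j _ => by ring
  have hdiag : ∑ i, b i ^ 2 = ∑ i, ∑ j, b i * b j * (if i = j then 1 else 0) := by simp [sq]
  rw [funext hexpand, hdiag]
  exact hasSum_sum fun i _ => hasSum_sum fun j _ => (hu i j).mul_left (b i * b j)

open scoped Classical in
noncomputable def extendByZero {α : Type*} (F : Finset α) (w : F → ℝ) : α → ℝ :=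
  fun y => if h : y ∈ F then w ⟨y, h⟩ else 0

theorem tsum_mul_extendByZero {α : Type*} (F : Finset α) (w : F → ℝ) (k : α → ℝ) :
    ∑' y, k y * extendByZero F w y = ∑ y : F, k y * w y := by
  rw [tsum_eq_sum (s := F) fun y hy => by simp [extendByZero, hy], ← Finset.sum_coe_sort]
  exact Finset.sum_congr rfl fun y _ => by simp [extendByZero]

theorem summable_sq_extendByZero {α : Type*} (F : Finset α) (w : F → ℝ) :
    Summable fun y => extendByZero F w y ^ 2 :=
  summable_of_ne_finset_zero (s := F) fun y hy => by simp [extendByZero, hy]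

theorem tsum_sq_extendByZero {α : Type*} (F : Finset α) (w : F → ℝ) :
    ∑' y, extendByZero F w y ^ 2 = w ⬝ᵥ w := by
  simp_rw [sq, tsum_mul_extendByZero]
  exact Finset.sum_congr rfl fun y _ => by simp [extendByZero]

theorem sum_sum_mul_mul_eq_sum_mul_window_mulVec {κ α β : Type*} [Fintype κ]
    (a : κ → β → ℝ) (b : κ → α → ℝ) (F : Finset α) (w : F → ℝ) (x : β) :
    ∑ y : F, (∑ j, a j x * b j y) * w y = ∑ j, a j x * (window b F *ᵥ w) j := by
  simp only [mulVec, dotProduct, window, of_apply, Finset.sum_mul, Finset.mul_sum, mul_assoc]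
  exact Finset.sum_comm

theorem sum_sq_mul_window_mulVec_le {α κ μ : Type*} [Fintype κ] [DecidableEq κ] [Fintype μ]
    {K : α → α → ℝ} {s : κ → ℝ} {u v : κ → α → ℝ} {L R : μ → α → ℝ}
    (hK : ∀ x y, K x y = ∑ j, s j * u j x * v j y - ∑ k, L k x * R k y)
    (hu : ∀ i j, HasSum (fun x => u i x * u j x) (if i = j then 1 else 0)) {C : ℝ}
    (hbound : ∀ g : α → ℝ, Summable (fun x => g x ^ 2) →
      ∑' x, (∑' y, K x y * g y) ^ 2 ≤ C ^ 2 * ∑' x, g x ^ 2)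
    {F : Finset α} {w : F → ℝ} (hw : window R F *ᵥ w = 0) :
    ∑ j, (s j * (window v F *ᵥ w) j) ^ 2 ≤ C ^ 2 * (w ⬝ᵥ w) := by
  have himage : ∀ x, ∑' y, K x y * extendByZero F w y
      = ∑ j, s j * (window v F *ᵥ w) j * u j x := by
    intro x
    simp_rw [tsum_mul_extendByZero, hK, sub_mul, Finset.sum_sub_distrib,
      sum_sum_mul_mul_eq_sum_mul_window_mulVec (fun j x => s j * u j x) v F w x,
      sum_sum_mul_mul_eq_sum_mul_window_mulVec L R F w x, hw]
    simp only [Pi.zero_apply, mul_zero, Finset.sum_const_zero, sub_zero]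
    exact Finset.sum_congr rfl fun j _ => by ring
  calc ∑ j, (s j * (window v F *ᵥ w) j) ^ 2
      = ∑' x, (∑' y, K x y * extendByZero F w y) ^ 2 := by
        simp_rw [himage]
        exact (hasSum_sq_sum_mul_of_orthonormal hu _).tsum_eq.symm
    _ ≤ C ^ 2 * ∑' y, extendByZero F w y ^ 2 := hbound _ (summable_sq_extendByZero F w)
    _ = C ^ 2 * (w ⬝ᵥ w) := by rw [tsum_sq_extendByZero]

theorem sq_mul_sum_sq_comp_le_sum_sq_mul {ι κ : Type*} [Fintype ι] [Fintype κ] (e : ι ↪ κ)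
    {s a : κ → ℝ} {δ : ℝ} (hδ : 0 ≤ δ) (hs : ∀ i, δ ≤ s (e i)) :
    δ ^ 2 * ∑ i, a (e i) ^ 2 ≤ ∑ j, (s j * a j) ^ 2 :=
  calc δ ^ 2 * ∑ i, a (e i) ^ 2 = ∑ i, δ ^ 2 * a (e i) ^ 2 := Finset.mul_sum _ _ _
    _ ≤ ∑ i, (s (e i) * a (e i)) ^ 2 := Finset.sum_le_sum fun i _ => by
        rw [mul_pow]; gcongr; exact hs i
    _ = ∑ j ∈ Finset.univ.map e, (s j * a j) ^ 2 :=
        (Finset.sum_map _ e fun j => (s j * a j) ^ 2).symm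
    _ ≤ ∑ j, (s j * a j) ^ 2 :=
        Finset.sum_le_sum_of_subset_of_nonneg (Finset.subset_univ _) fun _ _ _ => sq_nonneg _

theorem hankel_low_rank_lower_bound_general {Γ : Type*} {n : ℕ}
    (f : List Γ → ℝ)
    (s : Fin n → ℝ)
    (hmono : ∀ i j : Fin n, i ≤ j → s j ≤ s i)
    (u v : Fin n → List Γ → ℝ)
    (hu : ∀ i j : Fin n,
      HasSum (fun x : List Γ => u i x * u j x) (if i = j then 1 else 0))
    (hv : ∀ i j : Fin n,
      HasSum (fun x : List Γ => v i x * v j x) (if i = j then 1 else 0))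
    (hsvd : ∀ p q : List Γ, f (p ++ q) = ∑ i, s i * u i p * v i q)
    (nh : ℕ) (hn : nh < n)
    (f' : List Γ → ℝ) (hf' : IsRealizedByDim nh f')
    (C : ℝ) (hC : 0 ≤ C)
    (hbound : ∀ g : List Γ → ℝ, Summable (fun x : List Γ => (g x) ^ 2) →
      Summable (fun x : List Γ =>
          (∑' y : List Γ, (f (x ++ y) - f' (x ++ y)) * g y) ^ 2) ∧
        (∑' x : List Γ, (∑' y : List Γ, (f (x ++ y) - f' (x ++ y)) * g y) ^ 2)
          ≤ C ^ 2 * ∑' x : List Γ, (g x) ^ 2) :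
    s ⟨nh, hn⟩ ≤ C := by
  obtain ⟨L, R, hLR⟩ := hf'.exists_hankel_factorization
  let e : Fin (nh + 1) ↪ Fin n := Fin.castLEEmb hn
  let W F := window (fun i => v (e i)) F
  by_contra! hCδ
  obtain ⟨F, hF⟩ := ((tendsto_window_mul_transpose fun i j => by
      simpa [e.injective.eq_iff] using hv (e i) (e j)).eventually
    (eventually_forall_sphere_mul_dotProduct_lt (pow_lt_pow_left₀ hCδ hC two_ne_zero))).exists
  obtain ⟨c, hc, hker⟩ := (window R F * (W F)ᵀ).exists_mem_sphere_mulVec_eq_zero (by simp)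
  refine (hF c hc).not_ge ?_
  have hWc : ∀ i, ((W F * (W F)ᵀ) *ᵥ c) i = (window v F *ᵥ ((W F)ᵀ *ᵥ c)) (e i) := fun i => by
    rw [← mulVec_mulVec]; rfl
  calc s ⟨nh, hn⟩ ^ 2 * ((W F * (W F)ᵀ) *ᵥ c ⬝ᵥ (W F * (W F)ᵀ) *ᵥ c)
      ≤ ∑ j, (s j * (window v F *ᵥ ((W F)ᵀ *ᵥ c)) j) ^ 2 := by
        simp only [dotProduct, ← sq, hWc]
        exact sq_mul_sum_sq_comp_le_sum_sq_mul e (hC.trans hCδ.le) fun i =>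
          hmono _ _ (Fin.le_def.2 (Nat.lt_succ_iff.1 i.2))
    _ ≤ C ^ 2 * ((W F)ᵀ *ᵥ c ⬝ᵥ (W F)ᵀ *ᵥ c) :=
        sum_sq_mul_window_mulVec_le (fun x y => by rw [hsvd, hLR]) hu
          (fun g hg => (hbound g hg).2) (by rw [mulVec_mulVec, hker])
    _ = C ^ 2 * (c ⬝ᵥ (W F * (W F)ᵀ) *ᵥ c) := by
        rw [← mulVec_mulVec, dotProduct_mulVec c, ← mulVec_transpose]

/-- lower bound for low-rank approximation of rational series.
If `f ∈ ℓ¹` is rational of rank `n` with Hankel singular values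
`𝔰₁ ≥ ⋯ ≥ 𝔰ₙ > 0` (witnessed by an SVD `f(pq) = ∑ i, 𝔰ᵢ uᵢ(p) vᵢ(q)` with
orthonormal `u, v` in `ℓ²`), and `f'` is rational of rank at most `n̂` such
that the Hankel operator of `f − f'` is bounded on `ℓ²` with bound `C`
(i.e. `‖H_{f−f'} g‖₂² ≤ C² ‖g‖₂²`), then `C ≥ 𝔰_{n̂+1}`; that is, the operator
norm of `H_f − H_{f'}` is at least `𝔰_{n̂+1}`. -/
theorem hankel_low_rank_lower_bound {Γ : Type*} [Fintype Γ] {n : ℕ}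
    (f : List Γ → ℝ) (hf1 : Summable fun x : List Γ => |f x|)
    (hreal : IsRealizedByDim n f)
    (hmin : ∀ m : ℕ, IsRealizedByDim m f → n ≤ m)
    (s : Fin n → ℝ) (hpos : ∀ i, 0 < s i)
    (hmono : ∀ i j : Fin n, i ≤ j → s j ≤ s i)
    (u v : Fin n → List Γ → ℝ)
    (hu : ∀ i j : Fin n,
      HasSum (fun x : List Γ => u i x * u j x) (if i = j then 1 else 0))
    (hv : ∀ i j : Fin n,
      HasSum (fun x : List Γ => v i x * v j x) (if i = j then 1 else 0))
    (hsvd : ∀ p q : List Γ, f (p ++ q) = ∑ i, s i * u i p * v i q)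
    (nh : ℕ) (h1 : 1 ≤ nh) (hn : nh < n)
    (f' : List Γ → ℝ) (hf' : IsRealizedByDim nh f')
    (C : ℝ) (hC : 0 ≤ C)
    (hbound : ∀ g : List Γ → ℝ, Summable (fun x : List Γ => (g x) ^ 2) →
      Summable (fun x : List Γ =>
          (∑' y : List Γ, (f (x ++ y) - f' (x ++ y)) * g y) ^ 2) ∧
        (∑' x : List Γ, (∑' y : List Γ, (f (x ++ y) - f' (x ++ y)) * g y) ^ 2)
          ≤ C ^ 2 * ∑' x : List Γ, (g x) ^ 2) :
    s ⟨nh, hn⟩ ≤ C :=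
  hankel_low_rank_lower_bound_general f s hmono u v hu hv hsvd nh hn f' hf' C hC hbound
end

section
/- The WFA A over Σ = {a,b} with 2 states given by α₀ᵀ = [1, 0], α∞ᵀ = [1/3, 1/3], A_a = [[0, 1/3],[1/3, 0]], A_b = [[−1/3, 0],[0, 1/3]] realizes a function f_A satisfying f_A(x)² = 3^{−2(|x|+1)} for every x ∈ Σ*, i.e., |f_A(x)| = 3^{−(|x|+1)}. -/
open Matrix

/-- Transition matrix for the symbol `a` (encoded as `false`). -/
noncomputable def matA : Matrix (Fin 2) (Fin 2) ℝ := !![0, 1/3; 1/3, 0]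

/-- Transition matrix for the symbol `b` (encoded as `true`). -/
noncomputable def matB : Matrix (Fin 2) (Fin 2) ℝ := !![-(1/3), 0; 0, 1/3]

/-- The function realized by the example WFA over `Σ = {a, b}` with
`α₀ᵀ = [1, 0]`, `α∞ᵀ = [1/3, 1/3]`. -/
noncomputable def fEx (x : List Bool) : ℝ :=
  ![(1 : ℝ), 0] ⬝ᵥ ((x.map fun b => bif b then matB else matA).prod).mulVec ![1/3, 1/3]

/-!
Both transition matrices are `1/3` times a signed permutation matrix, so each of them maps a
vector whose entries all have absolute value `c` to one whose entries all have absolute value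
`c / 3`. Starting from `α∞ = [1/3, 1/3]`, every entry of `A_x α∞` therefore has absolute value
`3^{-(|x|+1)}`, and `f_A(x)` is its first entry.
-/

lemma matA_mulVec (v : Fin 2 → ℝ) : matA *ᵥ v = ![v 1 / 3, v 0 / 3] := by
  ext i
  fin_cases i <;> simp [matA, mulVec, dotProduct, Fin.sum_univ_two] <;> ring

lemma matB_mulVec (v : Fin 2 → ℝ) : matB *ᵥ v = ![-(v 0 / 3), v 1 / 3] := by
  ext i
  fin_cases i <;> simp [matB, mulVec, dotProduct, Fin.sum_univ_two] <;> ring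

lemma abs_symbol_mulVec_apply (b : Bool) {v : Fin 2 → ℝ} {c : ℝ} (hv : ∀ i, |v i| = c)
    (i : Fin 2) : |((bif b then matB else matA) *ᵥ v) i| = c / 3 := by
  cases b <;> simp only [cond_false, cond_true, matA_mulVec, matB_mulVec] <;> fin_cases i <;>
    simp [abs_div, hv]

lemma abs_word_mulVec_apply (x : List Bool) {v : Fin 2 → ℝ} {c : ℝ} (hv : ∀ i, |v i| = c)
    (i : Fin 2) :
    |((x.map fun b => bif b then matB else matA).prod *ᵥ v) i| = c * (1 / 3) ^ x.length := by
  induction x generalizing i with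
  | nil => simp [hv]
  | cons b x ih =>
    rw [List.map_cons, List.prod_cons, ← mulVec_mulVec, abs_symbol_mulVec_apply b ih,
      List.length_cons, pow_succ]
    ring

lemma fEx_eq_mulVec_apply_zero (x : List Bool) :
    fEx x = ((x.map fun b => bif b then matB else matA).prod *ᵥ ![1/3, 1/3]) 0 := by
  simp [fEx, dotProduct, Fin.sum_univ_two]

/-- the example WFA satisfies `f_A(x)² = 3^{−2(|x|+1)}` for all
`x ∈ Σ*`, i.e. `|f_A(x)| = 3^{−(|x|+1)}`. -/
theorem fEx_abs_eq :
    ∀ x : List Bool,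
      (fEx x) ^ 2 = ((1 : ℝ) / 3) ^ (2 * (x.length + 1)) ∧
        |fEx x| = ((1 : ℝ) / 3) ^ (x.length + 1) := by
  intro x
  have hα : ∀ i : Fin 2, |(![1/3, 1/3] : Fin 2 → ℝ) i| = 1 / 3 := by
    intro i
    fin_cases i <;> norm_num
  have habs : |fEx x| = ((1 : ℝ) / 3) ^ (x.length + 1) := by
    rw [fEx_eq_mulVec_apply_zero, abs_word_mulVec_apply x hα, pow_succ']
  refine ⟨?_, habs⟩
  rw [← sq_abs, habs, ← pow_mul, mul_comm]
end
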